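/- Let 0 ≤ θ < π/2. There exists an analytic function q : 𝔻∖{0} → ℂ (𝔻 the open unit disc) with the following properties: (a) for every open connected set U ⊆ 𝔻∖{0} admitting a holomorphic function L : U → ℂ with exp(L(z)) = i·z for all z ∈ U, the function h(z) = (1/2)(i z + 1/(i z)) − i cos(θ)·L(z) is holomorphic on U with nowhere-vanishing derivative, and q coincides with the Schwarzian derivative S[h] = h'''/h' − (3/2)(h''/h')² on U (in particular q is independent of the branch L); (b) q has a simple pole at 0 with residue −4cos(θ), i.e., lim_{z→0} z·q(z) = −4cos(θ). -/

import Mathlib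

open Complex Filter Topology

/-!
Every branch `L` of `log (i z)` has derivative `1/z`, so with `c = cos θ` the derivative
`h' = i (z² − 2cz + 1) / (2z²)` does not depend on the branch, and neither do
`h'' = i (cz − 1) / z³`, `h''' = i (3 − 2cz) / z⁴` and
`S[h] = (−4c z² + (6 + 2c²) z − 4c) / (z (z² − 2cz + 1)²)`.
The roots of `z² − 2cz + 1` are `e^{±iθ}`, on the unit circle, so `S[h]` is analytic on the
punctured disc, and `z S[h](z) → −4c` as `z → 0`.
-/

/-- The Schwarzian derivative `S[f] = f'''/f' − (3/2)(f''/f')²`. -/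
noncomputable def schwarzian (f : ℂ → ℂ) (z : ℂ) : ℂ :=
  deriv (deriv (deriv f)) z / deriv f z - (3 / 2) * (deriv (deriv f) z / deriv f z) ^ 2

noncomputable def geodesicPairMap (c : ℂ) (L : ℂ → ℂ) (z : ℂ) : ℂ :=
  (1 / 2 : ℂ) * (I * z + 1 / (I * z)) - I * c * L z

noncomputable def geodesicPairMapDeriv (c z : ℂ) : ℂ :=
  I * (z ^ 2 - 2 * c * z + 1) / (2 * z ^ 2)

noncomputable def geodesicPairSchwarzian (c z : ℂ) : ℂ :=
  (-4 * c * z ^ 2 + (6 + 2 * c ^ 2) * z - 4 * c) / (z * (z ^ 2 - 2 * c * z + 1) ^ 2)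

lemma sq_sub_two_mul_cos_mul_add_one_ne_zero (θ : ℝ) {z : ℂ} (hz : ‖z‖ < 1) :
    z ^ 2 - 2 * Real.cos θ * z + 1 ≠ 0 := by
  have hprod : exp (θ * I) * exp (-θ * I) = 1 := by rw [← exp_add]; simp
  have hfac : z ^ 2 - 2 * Real.cos θ * z + 1 = (z - exp (θ * I)) * (z - exp (-θ * I)) := by
    rw [ofReal_cos, two_cos]
    linear_combination -hprod
  have hroot : ∀ w : ℂ, ‖w‖ = 1 → z - w ≠ 0 := fun w hw h => by
    rw [sub_eq_zero.mp h, hw] at hz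
    exact lt_irrefl _ hz
  rw [hfac]
  exact mul_ne_zero (hroot _ (norm_exp_ofReal_mul_I θ))
    (hroot _ (by simpa using norm_exp_ofReal_mul_I (-θ)))

lemma hasDerivAt_of_cexp_eventuallyEq {L f : ℂ → ℂ} {f' z : ℂ}
    (hL : DifferentiableAt ℂ L z) (hf : HasDerivAt f f' z)
    (hexp : (fun w => exp (L w)) =ᶠ[𝓝 z] f) :
    HasDerivAt L (f' / f z) z := by
  have hderiv : exp (L z) * deriv L z = f' :=
    (hL.hasDerivAt.cexp.congr_of_eventuallyEq hexp.symm).unique hf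
  rw [← hexp.eq_of_nhds, ← hderiv, mul_div_cancel_left₀ _ (exp_ne_zero _)]
  exact hL.hasDerivAt

lemma hasDerivAt_geodesicPairMap {c z : ℂ} {L : ℂ → ℂ} (hz : z ≠ 0)
    (hL : DifferentiableAt ℂ L z) (hexp : (fun w => exp (L w)) =ᶠ[𝓝 z] fun w => I * w) :
    HasDerivAt (geodesicPairMap c L) (geodesicPairMapDeriv c z) z := by
  have hIz : HasDerivAt (fun w => I * w) I z := by
    simpa using (hasDerivAt_id z).const_mul I
  have hLz : HasDerivAt L (1 / z) z := by
    convert hasDerivAt_of_cexp_eventuallyEq hL hIz hexp using 1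
    field_simp
  have hfun : geodesicPairMap c L = fun w => 1 / 2 * (I * w + (I * w)⁻¹) - I * c * L w := by
    funext w
    simp [geodesicPairMap, one_div]
  rw [hfun]
  refine (((hIz.add (hIz.inv (mul_ne_zero I_ne_zero hz))).const_mul (1 / 2 : ℂ)).sub
    (hLz.const_mul (I * c))).congr_deriv ?_
  rw [geodesicPairMapDeriv, mul_pow, I_sq]
  field_simp
  ring

lemma hasDerivAt_geodesicPairMapDeriv (c : ℂ) {z : ℂ} (hz : z ≠ 0) :
    HasDerivAt (geodesicPairMapDeriv c) (I * (c * z - 1) / z ^ 3) z := by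
  have hnum := ((((hasDerivAt_id' z).fun_pow 2).fun_sub
    ((hasDerivAt_id' z).const_mul (2 * c))).add_const 1).const_mul I
  have hden := ((hasDerivAt_id' z).fun_pow 2).const_mul (2 : ℂ)
  refine (hnum.fun_div hden (by simp [hz])).congr_deriv ?_
  field_simp
  ring

lemma hasDerivAt_geodesicPairMapDeriv_deriv (c : ℂ) {z : ℂ} (hz : z ≠ 0) :
    HasDerivAt (fun w => I * (c * w - 1) / w ^ 3) (I * (3 - 2 * c * z) / z ^ 4) z := by
  have hnum := (((hasDerivAt_id' z).const_mul c).sub_const 1).const_mul I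
  refine (hnum.fun_div ((hasDerivAt_id' z).fun_pow 3) (pow_ne_zero 3 hz)).congr_deriv ?_
  field_simp
  ring

lemma schwarzian_eq_of_deriv_eventuallyEq {f g : ℂ → ℂ} {z : ℂ}
    (h : deriv f =ᶠ[𝓝 z] g) :
    schwarzian f z = deriv (deriv g) z / g z - 3 / 2 * (deriv g z / g z) ^ 2 := by
  rw [schwarzian, h.deriv.deriv_eq, h.deriv_eq, h.eq_of_nhds]

lemma schwarzian_eq_geodesicPairSchwarzian {f : ℂ → ℂ} {c z : ℂ} (hz : z ≠ 0)
    (hf : deriv f =ᶠ[𝓝 z] geodesicPairMapDeriv c) :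
    schwarzian f z = geodesicPairSchwarzian c z := by
  have h2 : deriv (geodesicPairMapDeriv c) =ᶠ[𝓝 z] fun w => I * (c * w - 1) / w ^ 3 :=
    (eventually_ne_nhds hz).mono fun w hw => (hasDerivAt_geodesicPairMapDeriv c hw).deriv
  rw [schwarzian_eq_of_deriv_eventuallyEq hf, h2.deriv_eq, h2.eq_of_nhds,
    (hasDerivAt_geodesicPairMapDeriv_deriv c hz).deriv, geodesicPairMapDeriv,
    geodesicPairSchwarzian]
  field_simp
  ring

lemma analyticOnNhd_geodesicPairSchwarzian_cos (θ : ℝ) :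
    AnalyticOnNhd ℂ (geodesicPairSchwarzian (Real.cos θ)) (Metric.ball 0 1 \ {0}) := by
  refine DifferentiableOn.analyticOnNhd (fun z ⟨hz1, hz0⟩ => ?_)
    (Metric.isOpen_ball.sdiff isClosed_singleton)
  have hP := sq_sub_two_mul_cos_mul_add_one_ne_zero θ (mem_ball_zero_iff.mp hz1)
  unfold geodesicPairSchwarzian
  fun_prop (disch := exact mul_ne_zero hz0 (pow_ne_zero 2 hP))

lemma tendsto_mul_geodesicPairSchwarzian (c : ℂ) :
    Tendsto (fun z => z * geodesicPairSchwarzian c z) (𝓝[≠] 0) (𝓝 (-4 * c)) := by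
  have hcont : ContinuousAt
      (fun z => (-4 * c * z ^ 2 + (6 + 2 * c ^ 2) * z - 4 * c) / (z ^ 2 - 2 * c * z + 1) ^ 2)
      0 :=
    ContinuousAt.div (by fun_prop) (by fun_prop) (by norm_num)
  have hlim := hcont.tendsto
  simp only [zero_pow two_ne_zero, mul_zero, add_zero, sub_zero, zero_add, zero_sub, one_pow,
    div_one, ← neg_mul] at hlim
  refine (hlim.mono_left nhdsWithin_le_nhds).congr' ?_
  filter_upwards [self_mem_nhdsWithin] with z (hz : z ≠ 0)
  rw [geodesicPairSchwarzian, ← mul_div_assoc, mul_div_mul_left _ _ hz]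

theorem schwarzian_of_geodesic_pair_simple_pole
    (θ : ℝ) :
    ∃ q : ℂ → ℂ,
      AnalyticOnNhd ℂ q (Metric.ball (0 : ℂ) 1 \ {0}) ∧
      (∀ U : Set ℂ, IsOpen U → IsConnected U → U ⊆ Metric.ball (0 : ℂ) 1 \ {0} →
        ∀ L : ℂ → ℂ, DifferentiableOn ℂ L U →
          (∀ z ∈ U, Complex.exp (L z) = Complex.I * z) →
          DifferentiableOn ℂ
            (fun z => (1 / 2 : ℂ) * (Complex.I * z + 1 / (Complex.I * z)) -
              Complex.I * (Real.cos θ : ℂ) * L z) U ∧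
          (∀ z ∈ U,
            deriv (fun z => (1 / 2 : ℂ) * (Complex.I * z + 1 / (Complex.I * z)) -
              Complex.I * (Real.cos θ : ℂ) * L z) z ≠ 0) ∧
          (∀ z ∈ U,
            q z = schwarzian (fun z => (1 / 2 : ℂ) * (Complex.I * z + 1 / (Complex.I * z)) -
              Complex.I * (Real.cos θ : ℂ) * L z) z)) ∧
      Tendsto (fun z => z * q z) (nhdsWithin (0 : ℂ) {(0 : ℂ)}ᶜ)
        (nhds (-4 * (Real.cos θ : ℂ))) := by
  refine ⟨geodesicPairSchwarzian (Real.cos θ), analyticOnNhd_geodesicPairSchwarzian_cos θ,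
    fun U hU _ hUsub L hL hexp => ?_, tendsto_mul_geodesicPairSchwarzian _⟩
  have hmem (z : ℂ) (hz : z ∈ U) : z ≠ 0 ∧ z ^ 2 - 2 * Real.cos θ * z + 1 ≠ 0 :=
    ⟨(hUsub hz).2,
      sq_sub_two_mul_cos_mul_add_one_ne_zero θ (mem_ball_zero_iff.mp (hUsub hz).1)⟩
  have hderiv (z : ℂ) (hz : z ∈ U) :
      HasDerivAt (geodesicPairMap (Real.cos θ) L) (geodesicPairMapDeriv (Real.cos θ) z) z :=
    hasDerivAt_geodesicPairMap (hmem z hz).1 ((hL z hz).differentiableAt (hU.mem_nhds hz))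
      (eventually_of_mem (hU.mem_nhds hz) hexp)
  refine ⟨fun z hz => (hderiv z hz).differentiableAt.differentiableWithinAt,
    fun z hz => ?_, fun z hz => ?_⟩
  · obtain ⟨hz0, hP⟩ := hmem z hz
    change deriv (geodesicPairMap (Real.cos θ) L) z ≠ 0
    rw [(hderiv z hz).deriv]
    exact div_ne_zero (mul_ne_zero I_ne_zero hP) (mul_ne_zero two_ne_zero (pow_ne_zero 2 hz0))
  · exact (schwarzian_eq_geodesicPairSchwarzian (hmem z hz).1
      (eventually_of_mem (hU.mem_nhds hz) fun w hw => (hderiv w hw).deriv)).symm
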